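/- Let X be a separable metric space, A ⊆ X a subset, f : X → ℝ a continuous function and c ∈ ℝ. If c is not a local extremum of f restricted to cl(A), then for each a ∈ {0,1}: cl(A) \ U^{1-a}(f,c) = cl(A ∩ U^a(f,c)). -/
import Mathlib


open TopologicalSpace

/-- `c` is a local maximum (resp. minimum) of `f` restricted to `A` if there is an open set
`V` such that `c` is the maximum (resp. minimum) value of `f` on `V ∩ A`, attained there;
a local extremum is a local maximum or a local minimum. -/
def IsLocalExtremumOn {X : Type*} [TopologicalSpace X] (f : X → ℝ) (A : Set X) (c : ℝ) :
    Prop :=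
  (∃ V : Set X, IsOpen V ∧ c ∈ f '' (V ∩ A) ∧ ∀ y ∈ V ∩ A, f y ≤ c) ∨
  (∃ V : Set X, IsOpen V ∧ c ∈ f '' (V ∩ A) ∧ ∀ y ∈ V ∩ A, c ≤ f y)

/-- `U^0(f,c) = {x | f x < c}` and `U^1(f,c) = {x | f x > c}`. -/
def Uset {X : Type*} (f : X → ℝ) (c : ℝ) : Bool → Set X
  | false => {x | f x < c}
  | true => {x | c < f x}

/-- If `c` is not a local extremum of `f` restricted to `cl A`, then
`cl A \ U^{1-a}(f,c) = cl (A ∩ U^a(f,c))` for each `a ∈ {0,1}`. -/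
theorem closure_diff_eq_closure_inter (X : Type*) [MetricSpace X] [SeparableSpace X]
    (A : Set X) (f : X → ℝ) (hf : Continuous f) (c : ℝ)
    (hc : ¬ IsLocalExtremumOn f (closure A) c) :
    ∀ a : Bool, closure A \ Uset f c (!a) = closure (A ∩ Uset f c a) := by
  intro a
  cases a
  · -- a = false : U^a = {f < c}, U^{!a} = {f > c}
    simp only [Bool.not_false, Bool.not_true, Uset]
    ext x
    constructor
    · rintro ⟨hxA, hxU⟩
      simp only [Set.mem_setOf_eq, not_lt] at hxU
      by_contra hx
      rw [mem_closure_iff] at hx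
      push_neg at hx
      obtain ⟨V, hV, hxV, hVe⟩ := hx
      have hle : ∀ y ∈ V ∩ A, c ≤ f y := by
        intro y ⟨hyV, hyA⟩
        by_contra h
        push_neg at h
        exact Set.eq_empty_iff_forall_notMem.mp hVe y ⟨hyV, hyA, h⟩
      have hle' : ∀ y ∈ V ∩ closure A, c ≤ f y := by
        intro y hy
        have : y ∈ closure (V ∩ A) := hV.inter_closure hy
        have hcl : closure (V ∩ A) ⊆ {z | c ≤ f z} :=
          closure_minimal hle (isClosed_le continuous_const hf)
        exact hcl this
      have hfx : f x = c := le_antisymm hxU (hle' x ⟨hxV, hxA⟩)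
      exact hc (Or.inr ⟨V, hV, ⟨x, ⟨hxV, hxA⟩, hfx⟩, hle'⟩)
    · intro hx
      refine ⟨closure_mono Set.inter_subset_left hx, ?_⟩
      have : x ∈ closure {z | f z < c} :=
        closure_mono Set.inter_subset_right hx
      have hcl : closure {z : X | f z < c} ⊆ {z | f z ≤ c} :=
        closure_minimal (Set.setOf_subset_setOf.mpr fun z hz => le_of_lt hz) (isClosed_le hf continuous_const)
      exact not_lt.mpr (Set.mem_setOf_eq ▸ hcl this)
  · -- a = true : U^a = {f > c}, U^{!a} = {f < c}
    simp only [Bool.not_false, Bool.not_true, Uset]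
    ext x
    constructor
    · rintro ⟨hxA, hxU⟩
      simp only [Set.mem_setOf_eq, not_lt] at hxU
      by_contra hx
      rw [mem_closure_iff] at hx
      push_neg at hx
      obtain ⟨V, hV, hxV, hVe⟩ := hx
      have hle : ∀ y ∈ V ∩ A, f y ≤ c := by
        intro y ⟨hyV, hyA⟩
        by_contra h
        push_neg at h
        exact Set.eq_empty_iff_forall_notMem.mp hVe y ⟨hyV, hyA, h⟩
      have hle' : ∀ y ∈ V ∩ closure A, f y ≤ c := by
        intro y hy
        have : y ∈ closure (V ∩ A) := hV.inter_closure hy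
        have hcl : closure (V ∩ A) ⊆ {z | f z ≤ c} :=
          closure_minimal hle (isClosed_le hf continuous_const)
        exact hcl this
      have hfx : f x = c := le_antisymm (hle' x ⟨hxV, hxA⟩) hxU
      exact hc (Or.inl ⟨V, hV, ⟨x, ⟨hxV, hxA⟩, hfx⟩, hle'⟩)
    · intro hx
      refine ⟨closure_mono Set.inter_subset_left hx, ?_⟩
      have : x ∈ closure {z | c < f z} :=
        closure_mono Set.inter_subset_right hx
      have hcl : closure {z : X | c < f z} ⊆ {z | c ≤ f z} :=
        closure_minimal (Set.setOf_subset_setOf.mpr fun z hz => le_of_lt hz) (isClosed_le continuous_const hf)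
      exact not_lt.mpr (Set.mem_setOf_eq ▸ hcl this)
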